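/- arXiv:math/0009253 — 2 statements merged into one kernel-verified Lean document; each statement's English description precedes it below -/
import Mathlib

section
/- Let x_1,...,x_k be nonnegative integers, write W_j = W_j^{(k)}(x_1,...,x_k) and assume all W_j > 0 and the differences W_j − W_{j-1} > 0 for 2 ≤ j ≤ N. Define α = min_{1≤j≤N} { W_j / W_{j-1} } and β = min{ W_1, min_{2≤j≤N} (W_j − W_{j-1})/(W_{j-1} − W_{j-2}) }. Then α ≥ β > α − 1. -/
/-!
Every monomial of degree `m + 1` is a monomial of degree `m` times a variable, so for
nonnegative `x` we have `W₂ ≤ W₁²`; together with `W₁ < W₂` this forces `W₁ > 1`, and the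
sequence `W₀ = 1, W₁, …, W_N` is strictly increasing.

For such a sequence, `β ≤ W_j / W_{j-1}` follows by induction on `j` from the mediant inequality:
`β W_{j-2} ≤ W_{j-1}` and `β (W_{j-1} - W_{j-2}) ≤ W_j - W_{j-1}` add up to `β W_{j-1} ≤ W_j`.
Conversely `β` is attained, either at `W₁ = W₁ / W₀ ≥ α`, or at a difference ratio, where
`W_j - W_{j-1} ≥ (α - 1) W_{j-1} > (α - 1)(W_{j-1} - W_{j-2})` when `α > 1`.
-/

/-- The Wronski (complete homogeneous symmetric) function
`W k δ x = ∑_{i₁+⋯+i_k = δ} x₁^{i₁} ⋯ x_k^{i_k}`. -/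
def W {R : Type*} [CommSemiring R] (k δ : ℕ) (x : Fin k → R) : R :=
  ∑ c ∈ Finset.filter (fun c => ∑ i, c i = δ)
      (Fintype.piFinset fun _ : Fin k => Finset.range (δ + 1)),
    ∏ i, x i ^ c i

open Finset

section Wronski

variable {R : Type*} [CommSemiring R] {k : ℕ}

lemma W_eq_sum_antidiagonalTuple (δ : ℕ) (x : Fin k → R) :
    W k δ x = ∑ c ∈ Nat.antidiagonalTuple k δ, ∏ i, x i ^ c i := by
  refine sum_congr (ext fun c => ?_) fun _ _ => rfl
  simp only [mem_filter, Fintype.mem_piFinset, mem_range, Nat.mem_antidiagonalTuple,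
    and_iff_right_iff_imp]
  rintro rfl i
  exact Nat.lt_succ_of_le (single_le_sum (fun j _ => Nat.zero_le (c j)) (mem_univ i))

lemma W_zero (x : Fin k → R) : W k 0 x = 1 := by
  simp [W_eq_sum_antidiagonalTuple, Nat.antidiagonalTuple_zero_right]

lemma exists_add_single_of_mem_antidiagonalTuple_succ {m : ℕ} {c : Fin k → ℕ}
    (hc : c ∈ Nat.antidiagonalTuple k (m + 1)) :
    ∃ i, c - Pi.single i 1 ∈ Nat.antidiagonalTuple k m ∧
      c = c - Pi.single i 1 + Pi.single i 1 := by
  rw [Nat.mem_antidiagonalTuple] at hc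
  obtain ⟨i, hi⟩ : ∃ i, c i ≠ 0 := by
    by_contra! h
    simp [h] at hc
  have hle : Pi.single i 1 ≤ c := fun j => by
    rcases eq_or_ne j i with rfl | hj <;> simp [*]; omega
  refine ⟨i, ?_, (tsub_add_cancel_of_le hle).symm⟩
  rw [Nat.mem_antidiagonalTuple]
  simp only [Pi.sub_apply]
  rw [sum_tsub_distrib _ fun j _ => hle j, hc]
  simp

variable [PartialOrder R] [IsOrderedRing R]

lemma W_succ_le_mul_W_one {x : Fin k → R} (hx : ∀ i, 0 ≤ x i) (m : ℕ) :
    W k (m + 1) x ≤ W k m x * W k 1 x := by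
  have hsub : Nat.antidiagonalTuple k (m + 1) ⊆
      (Nat.antidiagonalTuple k m ×ˢ Nat.antidiagonalTuple k 1).image fun p => p.1 + p.2 := by
    intro c hc
    obtain ⟨i, hi, hc⟩ := exists_add_single_of_mem_antidiagonalTuple_succ hc
    have hi1 : Pi.single i 1 ∈ Nat.antidiagonalTuple k 1 := by simp [Nat.mem_antidiagonalTuple]
    exact mem_image.mpr ⟨(_, Pi.single i 1), mem_product.mpr ⟨hi, hi1⟩, hc.symm⟩
  have hmon : ∀ c : Fin k → ℕ, 0 ≤ ∏ i, x i ^ c i :=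
    fun c => prod_nonneg fun i _ => pow_nonneg (hx i) _
  simp only [W_eq_sum_antidiagonalTuple, sum_mul_sum, ← sum_product']
  calc _ ≤ ∑ c ∈ (Nat.antidiagonalTuple k m ×ˢ Nat.antidiagonalTuple k 1).image
          (fun p => p.1 + p.2), ∏ i, x i ^ c i :=
        sum_le_sum_of_subset_of_nonneg hsub fun c _ _ => hmon c
    _ ≤ _ := sum_image_le_of_nonneg fun c _ => hmon c
    _ = _ := sum_congr rfl fun p _ => by simp only [Pi.add_apply, pow_add, prod_mul_distrib]

lemma W_nonneg {x : Fin k → R} (hx : ∀ i, 0 ≤ x i) (δ : ℕ) :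
    0 ≤ W k δ x :=
  sum_nonneg fun _ _ => prod_nonneg fun i _ => pow_nonneg (hx i) _

lemma one_lt_W_one {R : Type*} [CommRing R] [LinearOrder R] [IsStrictOrderedRing R]
    {x : Fin k → R} (hx : ∀ i, 0 ≤ x i) (h : W k 1 x < W k 2 x) : 1 < W k 1 x := by
  have := W_succ_le_mul_W_one hx 1
  have := W_nonneg hx 1
  nlinarith

end Wronski

lemma sub_one_lt_sub_div_sub {a u v w : ℝ} (ha : a ≤ w / v) (hu : 0 < u) (huv : u < v)
    (hvw : v < w) : a - 1 < (w - v) / (v - u) := by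
  have hv : 0 < v := hu.trans huv
  rw [lt_div_iff₀ (sub_pos.mpr huv)]
  rw [le_div_iff₀ hv] at ha
  rcases le_or_gt a 1 with ha1 | ha1
  · nlinarith
  · nlinarith

section Ratios

variable (f : ℕ → ℝ) (N : ℕ)

def ratioSet : Set ℝ := {r | ∃ j, 1 ≤ j ∧ j ≤ N ∧ r = f j / f (j - 1)}

def diffRatioSet : Set ℝ :=
  {r | ∃ j, 2 ≤ j ∧ j ≤ N ∧ r = (f j - f (j - 1)) / (f (j - 1) - f (j - 2))}

lemma diffRatioSet_finite : (diffRatioSet f N).Finite := by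
  refine ((Set.finite_Icc 2 N).image
    fun j => (f j - f (j - 1)) / (f (j - 1) - f (j - 2))).subset ?_
  rintro r ⟨j, h2, hN, rfl⟩
  exact ⟨j, ⟨h2, hN⟩, rfl⟩

variable {f N}

lemma one_le_of_monotoneOn_Iic (hf0 : f 0 = 1) (hm : MonotoneOn f (Set.Iic N)) {j : ℕ}
    (hj : j ≤ N) : 1 ≤ f j :=
  hf0 ▸ hm (Set.mem_Iic.mpr (Nat.zero_le N)) (Set.mem_Iic.mpr hj) (Nat.zero_le j)

lemma le_div_pred_of_le_diffRatioSet (hf0 : f 0 = 1)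
    (hmono : 2 ≤ N → StrictMonoOn f (Set.Iic N))
    {b : ℝ} (hb1 : b ≤ f 1) (hbd : ∀ r ∈ diffRatioSet f N, b ≤ r) :
    ∀ j, 1 ≤ j → j ≤ N → b ≤ f j / f (j - 1) := by
  intro j hj
  induction j, hj using Nat.le_induction with
  | base => exact fun _ => by simpa [hf0] using hb1
  | succ n hn ih =>
    intro hnN
    have hm := hmono (by omega)
    have hpos : 0 < f (n - 1) :=
      one_pos.trans_le (one_le_of_monotoneOn_Iic hf0 hm.monotoneOn (by omega))
    have hlt : f (n - 1) < f n := hm (Set.mem_Iic.mpr (by omega)) (Set.mem_Iic.mpr (by omega))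
      (by omega)
    have hd : b * (f n - f (n - 1)) ≤ f (n + 1) - f n :=
      (le_div_iff₀ (sub_pos.mpr hlt)).mp (hbd _ ⟨n + 1, by omega, hnN, rfl⟩)
    have hr : b * f (n - 1) ≤ f n := (le_div_iff₀ hpos).mp (ih (by omega))
    rw [Nat.add_sub_cancel, le_div_iff₀ (hpos.trans hlt)]
    linarith

theorem sInf_diffRatioSet_le_sInf_ratioSet_and_sub_one_lt (hN : 1 ≤ N) (hf0 : f 0 = 1)
    (hmono : 2 ≤ N → StrictMonoOn f (Set.Iic N)) :
    sInf ({f 1} ∪ diffRatioSet f N) ≤ sInf (ratioSet f N) ∧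
      sInf (ratioSet f N) - 1 < sInf ({f 1} ∪ diffRatioSet f N) := by
  set α := sInf (ratioSet f N)
  set β := sInf ({f 1} ∪ diffRatioSet f N)
  have hBfin : ({f 1} ∪ diffRatioSet f N).Finite :=
    (Set.finite_singleton _).union (diffRatioSet_finite f N)
  have hBbdd := hBfin.bddBelow
  have hβ_le : ∀ j, 1 ≤ j → j ≤ N → β ≤ f j / f (j - 1) :=
    le_div_pred_of_le_diffRatioSet hf0 hmono (csInf_le hBbdd (Or.inl rfl))
      fun r hr => csInf_le hBbdd (Or.inr hr)
  have hβα : β ≤ α :=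
    le_csInf ⟨_, 1, le_rfl, hN, rfl⟩ (by rintro _ ⟨j, h1, hj, rfl⟩; exact hβ_le j h1 hj)
  have hAbdd : BddBelow (ratioSet f N) :=
    ⟨β, by rintro _ ⟨j, h1, hj, rfl⟩; exact hβ_le j h1 hj⟩
  refine ⟨hβα, ?_⟩
  have hβmem : β ∈ {f 1} ∪ diffRatioSet f N :=
    Set.Nonempty.csInf_mem ⟨f 1, Or.inl rfl⟩ hBfin
  rcases hβmem with hβ | ⟨j, h2, hj, hβ⟩
  · have hα : α ≤ f 1 / f 0 := csInf_le hAbdd ⟨1, le_rfl, hN, rfl⟩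
    rw [hf0, div_one] at hα
    rw [Set.mem_singleton_iff.mp hβ]
    linarith
  · have hm := hmono (by omega)
    rw [hβ]
    refine sub_one_lt_sub_div_sub (csInf_le hAbdd ⟨j, by omega, hj, rfl⟩) ?_ ?_ ?_
    · exact one_pos.trans_le (one_le_of_monotoneOn_Iic hf0 hm.monotoneOn (by omega))
    · exact hm (Set.mem_Iic.mpr (by omega)) (Set.mem_Iic.mpr (by omega)) (by omega)
    · exact hm (Set.mem_Iic.mpr (by omega)) (Set.mem_Iic.mpr hj) (by omega)

end Ratios

theorem stmt8_general (k N : ℕ) (hN : 1 ≤ N) (x : Fin k → ℤ) (hx : ∀ i, 0 ≤ x i)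
    (hdiff : ∀ j, 2 ≤ j → j ≤ N → W k (j - 1) x < W k j x) :
    let α : ℝ := sInf {r | ∃ j, 1 ≤ j ∧ j ≤ N ∧ r = ((W k j x : ℤ) : ℝ) / ((W k (j - 1) x : ℤ) : ℝ)}
    let β : ℝ := sInf ({((W k 1 x : ℤ) : ℝ)} ∪
      {r | ∃ j, 2 ≤ j ∧ j ≤ N ∧
        r = (((W k j x : ℤ) : ℝ) - ((W k (j - 1) x : ℤ) : ℝ)) /
            (((W k (j - 1) x : ℤ) : ℝ) - ((W k (j - 2) x : ℤ) : ℝ))})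
    β ≤ α ∧ α - 1 < β := by
  intro α β
  have hmono : 2 ≤ N → StrictMonoOn (fun j => ((W k j x : ℤ) : ℝ)) (Set.Iic N) := by
    intro h2N
    refine strictMonoOn_Iic_of_lt_succ fun m hm => ?_
    rw [Order.succ_eq_add_one]
    rcases Nat.eq_zero_or_pos m with rfl | hm0
    · simpa [W_zero] using (Int.cast_lt (R := ℝ)).mpr (one_lt_W_one hx (hdiff 2 le_rfl h2N))
    · exact_mod_cast hdiff (m + 1) (by omega) hm
  exact sInf_diffRatioSet_le_sInf_ratioSet_and_sub_one_lt hN (by simp [W_zero]) hmono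

theorem stmt8 (k N : ℕ) (hN : 1 ≤ N) (x : Fin k → ℤ) (hx : ∀ i, 0 ≤ x i)
    (hpos : ∀ j ≤ N, 0 < W k j x)
    (hdiff : ∀ j, 2 ≤ j → j ≤ N → W k (j - 1) x < W k j x) :
    let α : ℝ := sInf {r | ∃ j, 1 ≤ j ∧ j ≤ N ∧ r = ((W k j x : ℤ) : ℝ) / ((W k (j - 1) x : ℤ) : ℝ)}
    let β : ℝ := sInf ({((W k 1 x : ℤ) : ℝ)} ∪
      {r | ∃ j, 2 ≤ j ∧ j ≤ N ∧
        r = (((W k j x : ℤ) : ℝ) - ((W k (j - 1) x : ℤ) : ℝ)) /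
            (((W k (j - 1) x : ℤ) : ℝ) - ((W k (j - 2) x : ℤ) : ℝ))})
    β ≤ α ∧ α - 1 < β :=
  stmt8_general k N hN x hx hdiff
end

section
/- For nonnegative integers x_1,...,x_k and j ≥ 2, if W_j denotes W_j^{(k)}(x_1,...,x_k), then W_{j-1}·W_j − W_j·W_{j-2} ≥ W_{j-1}·W_j − (W_{j-1})^2, i.e. (W_{j-1})^2 ≥ W_j·W_{j-2}; consequently whenever the differences are positive, (W_j − W_{j-1})/(W_{j-1} − W_{j-2}) ≤ W_j/W_{j-1}. -/
open Finset

lemma W_eq {R : Type*} [CommSemiring R] (k δ : ℕ) (x : Fin k → R) :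
    W k δ x = ∑ c ∈ Finset.Nat.antidiagonalTuple k δ, ∏ i, x i ^ c i := by
  unfold W
  congr 1
  ext c
  simp only [mem_filter, Fintype.mem_piFinset, Finset.Nat.mem_antidiagonalTuple, mem_range]
  constructor
  · rintro ⟨-, h⟩; exact h
  · intro h
    refine ⟨fun i => Nat.lt_succ_of_le ?_, h⟩
    rw [← h]
    exact Finset.single_le_sum (fun _ _ => Nat.zero_le _) (mem_univ i)

lemma W_zero_s9 {R : Type*} [CommSemiring R] (δ : ℕ) (x : Fin 0 → R) :
    W 0 δ x = if δ = 0 then 1 else 0 := by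
  rw [W_eq]
  cases δ with
  | zero => simp [Finset.Nat.antidiagonalTuple_zero_zero]
  | succ n => simp [Finset.Nat.antidiagonalTuple_zero_succ]

lemma W_succ {R : Type*} [CommSemiring R] (k δ : ℕ) (x : Fin (k + 1) → R) :
    W (k + 1) δ x = ∑ i ∈ range (δ + 1), x 0 ^ i * W k (δ - i) (Fin.tail x) := by
  rw [W_eq]
  have : ∀ i ∈ range (δ + 1), x 0 ^ i * W k (δ - i) (Fin.tail x)
      = ∑ d ∈ Finset.Nat.antidiagonalTuple k (δ - i), x 0 ^ i * ∏ t, Fin.tail x t ^ d t := by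
    intro i _; rw [W_eq, Finset.mul_sum]
  rw [Finset.sum_congr rfl this]
  rw [← Finset.sum_sigma (range (δ+1)) (fun i => Finset.Nat.antidiagonalTuple k (δ - i)) (fun p => x 0 ^ p.1 * ∏ t, Fin.tail x t ^ p.2 t)]
  refine Finset.sum_nbij' (fun c => ⟨c 0, Fin.tail c⟩) (fun p => Fin.cons p.1 p.2) ?_ ?_ ?_ ?_ ?_
  · intro c hc
    rw [Finset.Nat.mem_antidiagonalTuple] at hc
    simp only [Finset.mem_sigma, mem_range, Finset.Nat.mem_antidiagonalTuple]
    rw [Fin.sum_univ_succ] at hc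
    constructor
    · omega
    · simp only [Fin.tail]
      omega
  · intro p hp
    simp only [Finset.mem_sigma, mem_range, Finset.Nat.mem_antidiagonalTuple] at hp
    rw [Finset.Nat.mem_antidiagonalTuple, Fin.sum_univ_succ]
    simp only [Fin.cons_zero, Fin.cons_succ]
    omega
  · intro c _; exact Fin.cons_self_tail c
  · intro p _; exact Sigma.ext rfl (heq_of_eq (by simp [Fin.tail]))
  · intro c hc
    rw [Fin.prod_univ_succ]
    rfl

def LCseq (a : ℕ → ℤ) : Prop := ∀ i m, i ≤ m → a (m + 1) * a i ≤ a (i + 1) * a m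

def convSeq (t : ℤ) (a : ℕ → ℤ) (n : ℕ) : ℤ := ∑ i ∈ range (n + 1), t ^ (n - i) * a i

lemma convSeq_succ (t : ℤ) (a : ℕ → ℤ) (n : ℕ) :
    convSeq t a (n + 1) = t * convSeq t a n + a (n + 1) := by
  unfold convSeq
  rw [Finset.sum_range_succ, Finset.mul_sum]
  congr 1
  · apply Finset.sum_congr rfl
    intro i hi
    rw [mem_range] at hi
    have h : n + 1 - i = (n - i) + 1 := by omega
    rw [h, pow_succ]
    ring
  · simp

lemma convSeq_nonneg (t : ℤ) (a : ℕ → ℤ) (ht : 0 ≤ t) (ha : ∀ n, 0 ≤ a n) (n : ℕ) :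
    0 ≤ convSeq t a n :=
  Finset.sum_nonneg fun i _ => mul_nonneg (pow_nonneg ht _) (ha i)

lemma convSeq_key (t : ℤ) (a : ℕ → ℤ) (ht : 0 ≤ t) (ha : ∀ n, 0 ≤ a n) (hlc : LCseq a)
    (i m : ℕ) (him : i ≤ m) :
    a (m + 2) * convSeq t a i ≤ convSeq t a (i + 1) * a (m + 1) := by
  have hL : a (m + 2) * convSeq t a i = ∑ p ∈ range (i + 1), a (m + 2) * (t ^ (i - p) * a p) :=
    Finset.mul_sum _ _ _
  have hR : convSeq t a (i + 1) * a (m + 1)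
      = (∑ p ∈ range (i + 1), t ^ (i + 1 - (p + 1)) * a (p + 1) * a (m + 1))
        + t ^ (i + 1 - 0) * a 0 * a (m + 1) := by
    unfold convSeq
    rw [Finset.sum_mul, Finset.sum_range_succ']
  rw [hL, hR]
  have hterm : ∀ p ∈ range (i + 1),
      a (m + 2) * (t ^ (i - p) * a p) ≤ t ^ (i + 1 - (p + 1)) * a (p + 1) * a (m + 1) := by
    intro p hp
    rw [mem_range] at hp
    have h1 : i + 1 - (p + 1) = i - p := by omega
    rw [h1]
    have h2 : a (m + 2) * a p ≤ a (p + 1) * a (m + 1) := hlc p (m + 1) (by omega)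
    have h3 : 0 ≤ t ^ (i - p) := pow_nonneg ht _
    nlinarith [h2, h3]
  have hnn : 0 ≤ t ^ (i + 1 - 0) * a 0 * a (m + 1) :=
    mul_nonneg (mul_nonneg (pow_nonneg ht _) (ha 0)) (ha (m + 1))
  have := Finset.sum_le_sum hterm
  linarith

lemma convSeq_lc (t : ℤ) (a : ℕ → ℤ) (ht : 0 ≤ t) (ha : ∀ n, 0 ≤ a n) (hlc : LCseq a) :
    LCseq (convSeq t a) := by
  intro i m him
  obtain ⟨d, rfl⟩ := Nat.exists_eq_add_of_le him
  induction d with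
  | zero => simp [mul_comm]
  | succ d ih =>
    have ih' := ih (by omega)
    have key := convSeq_key t a ht ha hlc i (i + d) (by omega)
    calc convSeq t a (i + d + 1 + 1) * convSeq t a i
        = t * (convSeq t a (i + d + 1) * convSeq t a i)
            + a (i + d + 2) * convSeq t a i := by rw [convSeq_succ t a (i + d + 1)]; ring
      _ ≤ t * (convSeq t a (i + 1) * convSeq t a (i + d))
            + convSeq t a (i + 1) * a (i + d + 1) :=
          add_le_add (mul_le_mul_of_nonneg_left ih' ht) key
      _ = convSeq t a (i + 1) * convSeq t a (i + d + 1) := by rw [convSeq_succ t a (i + d)]; ring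

lemma W_succ' (k δ : ℕ) (x : Fin (k + 1) → ℤ) :
    W (k + 1) δ x = convSeq (x 0) (fun n => W k n (Fin.tail x)) δ := by
  rw [W_succ]
  unfold convSeq
  conv_rhs => rw [← Finset.sum_range_reflect]
  apply Finset.sum_congr rfl
  intro j hj
  rw [mem_range] at hj
  have h1 : δ + 1 - 1 - j = δ - j := by omega
  have h2 : δ - (δ - j) = j := by omega
  rw [h1, h2]

lemma W_main (k : ℕ) (x : Fin k → ℤ) (hx : ∀ i, 0 ≤ x i) :
    (∀ δ, 0 ≤ W k δ x) ∧ LCseq (fun δ => W k δ x) := by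
  induction k with
  | zero =>
    constructor
    · intro δ; rw [W_zero_s9]; split <;> norm_num
    · intro i m him
      simp only [W_zero_s9]
      have h1 : (if m + 1 = 0 then (1:ℤ) else 0) = 0 := by simp
      rw [h1, zero_mul]
      apply mul_nonneg <;> (split <;> norm_num)
  | succ k ih =>
    obtain ⟨ha, hlc⟩ := ih (Fin.tail x) (fun i => hx i.succ)
    have ht : 0 ≤ x 0 := hx 0
    constructor
    · intro δ
      rw [W_succ']
      exact convSeq_nonneg _ _ ht ha δ
    · intro i m him
      simp only [W_succ']
      exact convSeq_lc (x 0) _ ht ha hlc i m him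

theorem stmt9 (k : ℕ) (x : Fin k → ℤ) (hx : ∀ i, 0 ≤ x i) (j : ℕ) (hj : 2 ≤ j) :
    (W k (j - 1) x) ^ 2 ≥ W k j x * W k (j - 2) x ∧
      (0 < W k (j - 1) x → W k (j - 2) x < W k (j - 1) x →
        (((W k j x : ℤ) : ℚ) - ((W k (j - 1) x : ℤ) : ℚ)) /
            (((W k (j - 1) x : ℤ) : ℚ) - ((W k (j - 2) x : ℤ) : ℚ)) ≤
          ((W k j x : ℤ) : ℚ) / ((W k (j - 1) x : ℤ) : ℚ)) := by
  obtain ⟨ha, hlc⟩ := W_main k x hx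
  have h1 : j - 2 + 1 = j - 1 := by omega
  have h2 : j - 1 + 1 = j := by omega
  have key : W k j x * W k (j - 2) x ≤ W k (j - 1) x * W k (j - 1) x := by
    have := hlc (j - 2) (j - 1) (by omega)
    simpa only [h1, h2] using this
  constructor
  · rw [ge_iff_le, sq]
    exact key
  · intro hpos hlt
    rw [div_le_div_iff₀ (by exact_mod_cast sub_pos.mpr hlt) (by exact_mod_cast hpos)]
    have keyQ : ((W k j x : ℤ) : ℚ) * ((W k (j - 2) x : ℤ) : ℚ)
        ≤ ((W k (j - 1) x : ℤ) : ℚ) * ((W k (j - 1) x : ℤ) : ℚ) := by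
      exact_mod_cast key
    nlinarith [keyQ]
end
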